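/- arXiv:2001.05771 — 6 statements merged into one kernel-verified Lean document; each statement's English description precedes it below -/
import Mathlib

section
/- Let v ∈ L²((0,π), ℂ) and define F(λ) = ∫₀^π (sin λ(π−x)/λ) (∫₀^x cos(λt) v(t) dt) conj(v(x)) dx. Then for every λ ∈ ℂ with λ ≠ 0, F(λ) + F*(λ) = (1/(4iλ))·[ (Φ(λ) − Φ(−λ))(e^{iλπ} + e^{-iλπ}) + (ṽ(λ) + ṽ(−λ))(e^{iλπ} ṽ*(−λ) − e^{-iλπ} ṽ*(λ)) ]. -/
/-!
Write `w = conj v` and `M_μ u (x) = e^{-iμx} u(x)`. After expressing `sin` and `cos` through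
exponentials, every term of the identity is bilinear in the four functions `M_{±λ} v`, `M_{±λ} w`:
`ṽ(±λ)` and the conjugated transforms are their integrals over `(0, π)`, while `Φ(±λ)` and
`λ F(λ)`, `λ F*(λ)` are "triangle integrals" `∫₀^π f(x) ∫₀^x g(t) dt dx` of pairs of them.
By Fubini a product of two integrals is the sum of the two triangle integrals of its factors,
and the identity becomes a linear relation among eight triangle integrals.
-/

open MeasureTheory intervalIntegral

/-- Fourier transform `ṽ(λ) = ∫₀^π e^{-iλx} v(x) dx`. -/
noncomputable def ftilde (v : ℝ → ℂ) (l : ℂ) : ℂ :=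
  ∫ x in (0:ℝ)..Real.pi, Complex.exp (-Complex.I * l * x) * v x

/-- `Φ(λ) = ∫₀^π (∫₀^x e^{-iλ(x−t)} conj(v(t)) dt) v(x) dx`. -/
noncomputable def PhiFun (v : ℝ → ℂ) (l : ℂ) : ℂ :=
  ∫ x in (0:ℝ)..Real.pi,
    (∫ t in (0:ℝ)..x, Complex.exp (-Complex.I * l * (x - t)) * (starRingEnd ℂ) (v t)) * v x

/-- `F(λ) = ∫₀^π (sin λ(π−x)/λ) (∫₀^x cos(λt) v(t) dt) conj(v(x)) dx`. -/
noncomputable def Ffun (v : ℝ → ℂ) (l : ℂ) : ℂ :=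
  ∫ x in (0:ℝ)..Real.pi,
    (Complex.sin (l * ((Real.pi : ℂ) - x)) / l)
      * (∫ t in (0:ℝ)..x, Complex.cos (l * t) * v t) * (starRingEnd ℂ) (v x)

open Set ComplexConjugate

noncomputable def integralMulPrimitive {𝕜 : Type*} [RCLike 𝕜] (a b : ℝ) (f g : ℝ → 𝕜) : 𝕜 :=
  ∫ x in a..b, f x * ∫ t in a..x, g t

section IntegralMulPrimitive

variable {𝕜 : Type*} [RCLike 𝕜] {a b : ℝ} {f g : ℝ → 𝕜}

theorem IntervalIntegrable.conj {u : ℝ → 𝕜} (hu : IntervalIntegrable u volume a b) :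
    IntervalIntegrable (fun x => conj (u x)) volume a b :=
  ⟨(RCLike.conjCLE (K := 𝕜)).toContinuousLinearMap.integrable_comp hu.1,
    (RCLike.conjCLE (K := 𝕜)).toContinuousLinearMap.integrable_comp hu.2⟩

theorem IntervalIntegrable.mul_primitive (hf : IntervalIntegrable f volume a b)
    (hg : IntervalIntegrable g volume a b) :
    IntervalIntegrable (fun x => f x * ∫ t in a..x, g t) volume a b :=
  hf.mul_continuousOn (continuousOn_primitive_interval' hg left_mem_uIcc)

theorem integralMulPrimitive_linear_left {f₁ f₂ : ℝ → 𝕜} (α β : 𝕜)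
    (hf₁ : IntervalIntegrable f₁ volume a b) (hf₂ : IntervalIntegrable f₂ volume a b)
    (hg : IntervalIntegrable g volume a b) (hf : ∀ x, f x = α * f₁ x + β * f₂ x) :
    integralMulPrimitive a b f g
      = α * integralMulPrimitive a b f₁ g + β * integralMulPrimitive a b f₂ g := by
  simp only [integralMulPrimitive, hf, add_mul, mul_assoc]
  rw [integral_add ((hf₁.mul_primitive hg).const_mul α) ((hf₂.mul_primitive hg).const_mul β),
    intervalIntegral.integral_const_mul, intervalIntegral.integral_const_mul]

theorem integralMulPrimitive_linear_right {g₁ g₂ : ℝ → 𝕜} (α β : 𝕜)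
    (hf : IntervalIntegrable f volume a b) (hg₁ : IntervalIntegrable g₁ volume a b)
    (hg₂ : IntervalIntegrable g₂ volume a b) (hg : ∀ t, g t = α * g₁ t + β * g₂ t) :
    integralMulPrimitive a b f g
      = α * integralMulPrimitive a b f g₁ + β * integralMulPrimitive a b f g₂ := by
  have hprim : ∀ x ∈ uIcc a b,
      f x * ∫ t in a..x, g t = α * (f x * ∫ t in a..x, g₁ t) + β * (f x * ∫ t in a..x, g₂ t) := by
    intro x hx
    have hsub : uIcc a x ⊆ uIcc a b := uIcc_subset_uIcc_left hx
    simp only [hg]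
    rw [integral_add ((hg₁.mono_set hsub).const_mul α) ((hg₂.mono_set hsub).const_mul β),
      intervalIntegral.integral_const_mul, intervalIntegral.integral_const_mul]
    ring
  rw [integralMulPrimitive, integral_congr hprim,
    integral_add ((hf.mul_primitive hg₁).const_mul α) ((hf.mul_primitive hg₂).const_mul β),
    intervalIntegral.integral_const_mul, intervalIntegral.integral_const_mul,
    integralMulPrimitive, integralMulPrimitive]

theorem integralMulPrimitive_bilinear {f₁ f₂ g₁ g₂ : ℝ → 𝕜} (α₁ α₂ β₁ β₂ : 𝕜)
    (hf₁ : IntervalIntegrable f₁ volume a b) (hf₂ : IntervalIntegrable f₂ volume a b)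
    (hg₁ : IntervalIntegrable g₁ volume a b) (hg₂ : IntervalIntegrable g₂ volume a b)
    (hf : ∀ x, f x = α₁ * f₁ x + α₂ * f₂ x) (hg : ∀ t, g t = β₁ * g₁ t + β₂ * g₂ t) :
    integralMulPrimitive a b f g
      = α₁ * β₁ * integralMulPrimitive a b f₁ g₁ + α₁ * β₂ * integralMulPrimitive a b f₁ g₂
        + α₂ * β₁ * integralMulPrimitive a b f₂ g₁ + α₂ * β₂ * integralMulPrimitive a b f₂ g₂ := by
  have hg' : IntervalIntegrable g volume a b := by
    simpa only [← funext hg] using (hg₁.const_mul β₁).add (hg₂.const_mul β₂)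
  rw [integralMulPrimitive_linear_left α₁ α₂ hf₁ hf₂ hg' hf,
    integralMulPrimitive_linear_right β₁ β₂ hf₁ hg₁ hg₂ hg,
    integralMulPrimitive_linear_right β₁ β₂ hf₂ hg₁ hg₂ hg]
  ring

theorem integral_mul_integral_eq_integralMulPrimitive_add (hab : a ≤ b)
    (hf : IntervalIntegrable f volume a b) (hg : IntervalIntegrable g volume a b) :
    (∫ x in a..b, f x) * (∫ x in a..b, g x)
      = integralMulPrimitive a b f g + integralMulPrimitive a b g f := by
  set μ := volume.restrict (Ioc a b)
  set K : ℝ × ℝ → 𝕜 := {z | z.2 < z.1}.indicator fun z => f z.1 * g z.2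
  have hK : Integrable K (μ.prod μ) :=
    (hf.1.mul_prod hg.1).indicator (measurableSet_lt measurable_snd measurable_fst)
  have hx : ∀ x ∈ Ioc a b, ∫ t, K (x, t) ∂μ = f x * ∫ t in a..x, g t := by
    intro x hx
    have hset : (Iio x ∩ Ioc a b : Set ℝ) =ᵐ[volume] Ioc a x := by
      have : (Iio x ∩ Ioc a b : Set ℝ) = Ioo a x := by
        ext t; simp only [mem_inter_iff, mem_Iio, mem_Ioc, mem_Ioo]; grind
      rw [this]; exact Ioo_ae_eq_Ioc
    have : (fun t => K (x, t)) = fun t => f x * (Iio x).indicator g t := by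
      ext t; by_cases ht : t < x <;> simp [K, ht]
    rw [this, MeasureTheory.integral_const_mul, MeasureTheory.integral_indicator measurableSet_Iio,
      Measure.restrict_restrict measurableSet_Iio, Measure.restrict_congr_set hset,
      integral_of_le hx.1.le]
  have ht : ∀ t ∈ Ioc a b, ∫ x, K (x, t) ∂μ = g t * ((∫ x in a..b, f x) - ∫ x in a..t, f x) := by
    intro t ht
    have hset : (Ioi t ∩ Ioc a b : Set ℝ) = Ioc t b := by
      rw [inter_comm, Ioc_inter_Ioi, max_eq_right ht.1.le]
    have : (fun x => K (x, t)) = fun x => g t * (Ioi t).indicator f x := by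
      ext x; by_cases hxt : t < x <;> simp [K, hxt, mul_comm]
    rw [this, MeasureTheory.integral_const_mul, MeasureTheory.integral_indicator measurableSet_Ioi,
      Measure.restrict_restrict measurableSet_Ioi, hset, ← integral_of_le ht.2,
      integral_interval_sub_left hf
        (hf.mono_set (uIcc_subset_uIcc_left (uIoc_subset_uIcc (uIoc_of_le hab ▸ ht))))]
  have hswap := integral_integral_swap (f := fun x t => K (x, t)) hK
  rw [integral_congr_ae (ae_restrict_of_forall_mem measurableSet_Ioc hx),
    integral_congr_ae (ae_restrict_of_forall_mem measurableSet_Ioc ht)] at hswap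
  simp only [mul_sub] at hswap
  rw [integral_sub (hg.1.mul_const _) (hg.mul_primitive hf).1, MeasureTheory.integral_mul_const,
    ← integral_of_le hab, ← integral_of_le hab, ← integral_of_le hab] at hswap
  rw [integralMulPrimitive, integralMulPrimitive, hswap]
  ring

end IntegralMulPrimitive

noncomputable def modulation (μ : ℂ) (u : ℝ → ℂ) (x : ℝ) : ℂ :=
  Complex.exp (-Complex.I * μ * x) * u x

theorem IntervalIntegrable.modulation {u : ℝ → ℂ} {a b : ℝ} (hu : IntervalIntegrable u volume a b)
    (μ : ℂ) : IntervalIntegrable (modulation μ u) volume a b :=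
  hu.continuousOn_mul
    (by fun_prop : Continuous fun x : ℝ => Complex.exp (-Complex.I * μ * x)).continuousOn

theorem Complex.cos_mul_eq_exp (l x : ℂ) :
    Complex.cos (l * x)
      = 2⁻¹ * Complex.exp (-Complex.I * l * x) + 2⁻¹ * Complex.exp (-Complex.I * -l * x) := by
  rw [Complex.cos]; ring_nf

theorem Complex.sin_mul_sub_eq_exp (l p x : ℂ) :
    Complex.sin (l * (p - x))
      = Complex.exp (Complex.I * l * p) / (2 * Complex.I) * Complex.exp (-Complex.I * l * x)
        + -Complex.exp (-Complex.I * l * p) / (2 * Complex.I) * Complex.exp (-Complex.I * -l * x) := by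
  have h₁ : Complex.exp (-(l * (p - x)) * Complex.I)
      = Complex.exp (-Complex.I * l * p) * Complex.exp (-Complex.I * -l * x) := by
    rw [← Complex.exp_add]; ring_nf
  have h₂ : Complex.exp (l * (p - x) * Complex.I)
      = Complex.exp (Complex.I * l * p) * Complex.exp (-Complex.I * l * x) := by
    rw [← Complex.exp_add]; ring_nf
  have hI : (2 * Complex.I)⁻¹ = -Complex.I / 2 := by
    rw [mul_inv, Complex.inv_I]; ring
  rw [Complex.sin, h₁, h₂]
  simp only [div_eq_mul_inv, hI]
  ring

section Transforms

variable (v : ℝ → ℂ)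

theorem ftilde_eq_integral_modulation (μ : ℂ) :
    ftilde v μ = ∫ x in (0:ℝ)..Real.pi, modulation μ v x := rfl

theorem conj_ftilde_conj (μ : ℂ) :
    conj (ftilde v (conj μ)) = ftilde (fun x => conj (v x)) (-μ) := by
  rw [ftilde, ← intervalIntegral_conj]
  refine integral_congr fun x _ => ?_
  rw [map_mul, ← Complex.exp_conj]
  simp

theorem conj_Ffun_conj (l : ℂ) :
    conj (Ffun v (conj l)) = Ffun (fun x => conj (v x)) l := by
  rw [Ffun, ← intervalIntegral_conj]
  refine integral_congr fun x _ => ?_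
  simp only [map_mul, map_div₀, ← intervalIntegral_conj, ← Complex.sin_conj, ← Complex.cos_conj,
    map_sub, Complex.conj_conj, Complex.conj_ofReal]

theorem PhiFun_eq_integralMulPrimitive (μ : ℂ) :
    PhiFun v μ = integralMulPrimitive 0 Real.pi (modulation μ v)
      (modulation (-μ) fun t => conj (v t)) := by
  rw [PhiFun, integralMulPrimitive]
  refine integral_congr fun x _ => ?_
  have hinner : ∫ t in (0:ℝ)..x, Complex.exp (-Complex.I * μ * (x - t)) * conj (v t)
      = Complex.exp (-Complex.I * μ * x)
        * ∫ t in (0:ℝ)..x, modulation (-μ) (fun t => conj (v t)) t := by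
    rw [← intervalIntegral.integral_const_mul]
    refine integral_congr fun t _ => ?_
    rw [modulation, ← mul_assoc, ← Complex.exp_add]
    ring_nf
  rw [hinner, modulation]
  ring

theorem Ffun_eq_integralMulPrimitive (l : ℂ) :
    Ffun v l = l⁻¹ * integralMulPrimitive 0 Real.pi
      (fun x => Complex.sin (l * (Real.pi - x)) * conj (v x))
      (fun t => Complex.cos (l * t) * v t) := by
  rw [Ffun, integralMulPrimitive, ← intervalIntegral.integral_const_mul]
  refine integral_congr fun x _ => ?_
  ring

end Transforms

theorem Ffun_eq_sum_integralMulPrimitive {v : ℝ → ℂ}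
    (hv : IntervalIntegrable v volume 0 Real.pi) (l : ℂ) :
    let w := fun x => conj (v x)
    Ffun v l = l⁻¹ * (
      Complex.exp (Complex.I * l * Real.pi) / (2 * Complex.I) * 2⁻¹
          * integralMulPrimitive 0 Real.pi (modulation l w) (modulation l v)
        + Complex.exp (Complex.I * l * Real.pi) / (2 * Complex.I) * 2⁻¹
          * integralMulPrimitive 0 Real.pi (modulation l w) (modulation (-l) v)
        + -Complex.exp (-Complex.I * l * Real.pi) / (2 * Complex.I) * 2⁻¹
          * integralMulPrimitive 0 Real.pi (modulation (-l) w) (modulation l v)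
        + -Complex.exp (-Complex.I * l * Real.pi) / (2 * Complex.I) * 2⁻¹
          * integralMulPrimitive 0 Real.pi (modulation (-l) w) (modulation (-l) v)) := by
  intro w
  rw [Ffun_eq_integralMulPrimitive, integralMulPrimitive_bilinear _ _ _ _ (hv.conj.modulation l)
    (hv.conj.modulation (-l)) (hv.modulation l) (hv.modulation (-l))]
  · intro x
    rw [Complex.sin_mul_sub_eq_exp, modulation, modulation]
    ring
  · intro t
    rw [Complex.cos_mul_eq_exp, modulation, modulation]
    ring

theorem stmt3_general (v : ℝ → ℂ)
    (hv : MemLp v 2 (volume.restrict (Set.Ioo (0:ℝ) Real.pi)))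
    (l : ℂ) :
    Ffun v l + (starRingEnd ℂ) (Ffun v ((starRingEnd ℂ) l))
      = (1 / (4 * Complex.I * l)) *
        ((PhiFun v l - PhiFun v (-l)) *
            (Complex.exp (Complex.I * l * Real.pi) + Complex.exp (-Complex.I * l * Real.pi))
          + (ftilde v l + ftilde v (-l)) *
            (Complex.exp (Complex.I * l * Real.pi)
                * (starRingEnd ℂ) (ftilde v ((starRingEnd ℂ) (-l)))
              - Complex.exp (-Complex.I * l * Real.pi)
                * (starRingEnd ℂ) (ftilde v ((starRingEnd ℂ) l)))) := by
  have hv₀ : IntervalIntegrable v volume 0 Real.pi :=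
    (intervalIntegrable_iff_integrableOn_Ioo_of_le Real.pi_pos.le).2 (hv.integrable one_le_two)
  set w := fun x => conj (v x)
  have hprod : ∀ μ ν : ℂ,
      (∫ x in (0:ℝ)..Real.pi, modulation μ v x) * (∫ x in (0:ℝ)..Real.pi, modulation ν w x)
        = integralMulPrimitive 0 Real.pi (modulation μ v) (modulation ν w)
          + integralMulPrimitive 0 Real.pi (modulation ν w) (modulation μ v) := fun μ ν =>
    integral_mul_integral_eq_integralMulPrimitive_add Real.pi_pos.le (hv₀.modulation μ)
      (hv₀.conj.modulation ν)
  rw [conj_Ffun_conj, Ffun_eq_sum_integralMulPrimitive hv₀,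
    Ffun_eq_sum_integralMulPrimitive hv₀.conj, PhiFun_eq_integralMulPrimitive,
    PhiFun_eq_integralMulPrimitive, conj_ftilde_conj, conj_ftilde_conj, neg_neg]
  simp only [ftilde_eq_integral_modulation, Complex.conj_conj]
  set p := Complex.exp (Complex.I * l * Real.pi)
  set q := Complex.exp (-Complex.I * l * Real.pi)
  linear_combination (-p / (4 * Complex.I * l)) * hprod l l
    + (-p / (4 * Complex.I * l)) * hprod (-l) l
    + (q / (4 * Complex.I * l)) * hprod l (-l)
    + (q / (4 * Complex.I * l)) * hprod (-l) (-l)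

theorem stmt3 (v : ℝ → ℂ)
    (hv : MemLp v 2 (volume.restrict (Set.Ioo (0:ℝ) Real.pi)))
    (l : ℂ) (hl : l ≠ 0) :
    Ffun v l + (starRingEnd ℂ) (Ffun v ((starRingEnd ℂ) l))
      = (1 / (4 * Complex.I * l)) *
        ((PhiFun v l - PhiFun v (-l)) *
            (Complex.exp (Complex.I * l * Real.pi) + Complex.exp (-Complex.I * l * Real.pi))
          + (ftilde v l + ftilde v (-l)) *
            (Complex.exp (Complex.I * l * Real.pi)
                * (starRingEnd ℂ) (ftilde v ((starRingEnd ℂ) (-l)))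
              - Complex.exp (-Complex.I * l * Real.pi)
                * (starRingEnd ℂ) (ftilde v ((starRingEnd ℂ) l)))) :=
  stmt3_general v hv l
end

section
/- Let v : [0,π] → ℂ be continuous, α ∈ ℝ, and let λ ∈ ℂ satisfy λ ≠ 0, sin(λπ/2) ≠ 0, and Δ(α,λ) = 0. Define u(x) = ∫₀^x cos λ(π/2 − x + t) v(t) dt + ∫ₓ^π cos λ(π/2 − t + x) v(t) dt for x ∈ [0,π]. Then u is twice continuously differentiable on [0,π], u(0) = u(π), u'(0) = u'(π), and −u''(x) + α·(∫₀^π u(t) conj(v(t)) dt)·v(x) = λ²·u(x) for all x ∈ [0,π]. -/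
open MeasureTheory intervalIntegral

/-- `Δ(0,λ) = 2(1 − cos πλ)`. -/
noncomputable def Delta0 (l : ℂ) : ℂ := 2 * (1 - Complex.cos (Real.pi * l))

/-- `R(λ) = (1 − e^{-iλπ})(Φ(λ)(1 − e^{iλπ}) − ṽ(λ)ṽ*(λ))`. -/
noncomputable def Rfun (v : ℝ → ℂ) (l : ℂ) : ℂ :=
  (1 - Complex.exp (-Complex.I * l * Real.pi)) *
    (PhiFun v l * (1 - Complex.exp (Complex.I * l * Real.pi))
      - ftilde v l * (starRingEnd ℂ) (ftilde v ((starRingEnd ℂ) l)))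

/-- `Δ(α,λ) = Δ(0,λ) + (α/(2iλ))(R(λ) − R(−λ))`. -/
noncomputable def DeltaA (v : ℝ → ℂ) (α : ℝ) (l : ℂ) : ℂ :=
  Delta0 l + ((α : ℂ) / (2 * Complex.I * l)) * (Rfun v l - Rfun v (-l))

/-- The candidate eigenfunction
`u(x) = ∫₀^x cos λ(π/2 − x + t) v(t) dt + ∫ₓ^π cos λ(π/2 − t + x) v(t) dt`. -/
noncomputable def eigenFun (v : ℝ → ℂ) (l : ℂ) (x : ℝ) : ℂ :=
  (∫ t in (0:ℝ)..x, Complex.cos (l * ((Real.pi : ℂ) / 2 - x + t)) * v t)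
    + ∫ t in x..Real.pi, Complex.cos (l * ((Real.pi : ℂ) / 2 - t + x)) * v t

/-! With `V_m(x) = ∫₀^x e^{im(x-t)} v(t) dt`, the function `u` equals
`i sin(λπ/2) (V_{-λ} - V_λ)(x) + a e^{iλx} + b e^{-iλx}`: a variation-of-constants solution of
`u'' + λ² u = 2λ sin(λπ/2) v` plus a homogeneous one. This gives the regularity, the periodic
boundary conditions, and the equation up to the scalar `α ∫₀^π u v̄`. Integration by parts writes
`Φ` through the same Volterra integrals, whence `R(λ) - R(-λ) = -4i sin(λπ/2) ∫₀^π u v̄` and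
`Δ(α,λ) = (2 sin(λπ/2) / λ) (2λ sin(λπ/2) - α ∫₀^π u v̄)`; as `sin(λπ/2) ≠ 0`, the root condition
says `α ∫₀^π u v̄ = 2λ sin(λπ/2)`, which is exactly what the equation needs. -/

open Complex ComplexConjugate Set

noncomputable def expPrimitive (g : ℝ → ℂ) (m : ℂ) (x : ℝ) : ℂ :=
  ∫ t in (0:ℝ)..x, exp (-I * m * t) * g t

/-- `∫₀^x e^{im(x-t)} g(t) dt`, written as a product so that it can be differentiated. -/
noncomputable def expVolterra (g : ℝ → ℂ) (m : ℂ) (x : ℝ) : ℂ :=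
  exp (I * m * x) * expPrimitive g m x

noncomputable def expVolterraInner (g : ℝ → ℂ) (m : ℂ) : ℂ :=
  ∫ x in (0:ℝ)..Real.pi, expVolterra g m x * conj (g x)

lemma hasDerivAt_cexp_mul_ofReal (c : ℂ) (x : ℝ) :
    HasDerivAt (fun y : ℝ => exp (c * y)) (c * exp (c * x)) x := by
  simpa [mul_comm] using (((hasDerivAt_id (x : ℂ)).const_mul c).cexp).comp_ofReal

section Volterra

variable {g : ℝ → ℂ} (hg : Continuous g)
include hg

lemma hasDerivAt_expPrimitive (m : ℂ) (x : ℝ) :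
    HasDerivAt (expPrimitive g m) (exp (-I * m * x) * g x) x :=
  ((by fun_prop : Continuous fun t : ℝ => exp (-I * m * t) * g t).integral_hasStrictDerivAt
    0 x).hasDerivAt

lemma hasDerivAt_expVolterra (m : ℂ) (x : ℝ) :
    HasDerivAt (expVolterra g m) (I * m * expVolterra g m x + g x) x := by
  refine ((hasDerivAt_cexp_mul_ofReal (I * m) x).mul (hasDerivAt_expPrimitive hg m x)).congr_deriv ?_
  have hinv : exp (I * m * x) * exp (-I * m * x) = 1 := by rw [← exp_add]; ring_nf; exact exp_zero
  rw [expVolterra]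
  linear_combination g x * hinv

lemma continuous_expVolterra (m : ℂ) : Continuous (expVolterra g m) :=
  continuous_iff_continuousAt.2 fun x => (hasDerivAt_expVolterra hg m x).continuousAt

end Volterra

lemma conj_ftilde_conj_s6 (g : ℝ → ℂ) (m : ℂ) :
    conj (ftilde g (conj m)) = ∫ x in (0:ℝ)..Real.pi, exp (I * m * x) * conj (g x) := by
  rw [ftilde, ← intervalIntegral.intervalIntegral_conj]
  refine integral_congr fun x _ => ?_
  simp only [map_mul, map_neg, conj_I, conj_conj, conj_ofReal, ← exp_conj]
  ring_nf

/-- Integration by parts: `Φ(m) = ∫₀^π Q P'` where `P' = e^{-imx} g` and `Q' = e^{imx} conj g`. -/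
lemma PhiFun_eq_sub {g : ℝ → ℂ} (hg : Continuous g) (m : ℂ) :
    PhiFun g m = ftilde g m * conj (ftilde g (conj m)) - expVolterraInner g m := by
  set Q : ℝ → ℂ := fun x => ∫ t in (0:ℝ)..x, exp (I * m * t) * conj (g t) with hQ_def
  have hQ_cont : Continuous fun t : ℝ => exp (I * m * t) * conj (g t) := by fun_prop
  have hQ (x : ℝ) : HasDerivAt Q (exp (I * m * x) * conj (g x)) x :=
    (hQ_cont.integral_hasStrictDerivAt 0 x).hasDerivAt
  have hinner (x : ℝ) : (∫ t in (0:ℝ)..x, exp (-I * m * (x - t)) * conj (g t)) * g x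
      = Q x * (exp (-I * m * x) * g x) := by
    have hsplit (t : ℝ) : exp (-I * m * (x - t)) * conj (g t)
        = exp (-I * m * x) * (exp (I * m * t) * conj (g t)) := by
      rw [← mul_assoc, ← exp_add]; ring_nf
    rw [integral_congr fun t _ => hsplit t, intervalIntegral.integral_const_mul]
    ring
  rw [PhiFun, integral_congr fun x _ => hinner x,
    integral_mul_deriv_eq_deriv_mul (fun x _ => hQ x)
      (fun x _ => hasDerivAt_expPrimitive hg m x) (hQ_cont.intervalIntegrable _ _)
      ((by fun_prop : Continuous fun t : ℝ => exp (-I * m * t) * g t).intervalIntegrable _ _),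
    conj_ftilde_conj_s6, expVolterraInner]
  simp only [hQ_def, integral_same, zero_mul, sub_zero, expVolterra]
  rw [mul_comm]
  congr 1
  exact integral_congr fun x _ => by ring

section Eigenfunction

variable {g : ℝ → ℂ} (hg : Continuous g)

lemma expPrimitive_zero (m : ℂ) : expPrimitive g m 0 = 0 := integral_same

lemma expPrimitive_pi (m : ℂ) : expPrimitive g m Real.pi = ftilde g m := rfl

include hg

lemma integral_cos_add_mul_mul (c k : ℂ) (a b : ℝ) :
    ∫ t in a..b, cos (c + k * t) * g t
      = (exp (c * I) * (expPrimitive g (-k) b - expPrimitive g (-k) a)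
        + exp (-c * I) * (expPrimitive g k b - expPrimitive g k a)) / 2 := by
  have hint (m : ℂ) (a b : ℝ) :
      IntervalIntegrable (fun t : ℝ => exp (-I * m * t) * g t) volume a b :=
    (by fun_prop : Continuous fun t : ℝ => exp (-I * m * t) * g t).intervalIntegrable _ _
  have hpt (t : ℝ) : cos (c + k * t) * g t
      = (exp (c * I) * (exp (-I * -k * t) * g t) + exp (-c * I) * (exp (-I * k * t) * g t)) / 2 := by
    rw [cos, ← mul_assoc, ← mul_assoc, ← exp_add, ← exp_add]; ring_nf
  rw [integral_congr fun t _ => hpt t, intervalIntegral.integral_div,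
    integral_add ((hint _ _ _).const_mul _) ((hint _ _ _).const_mul _),
    intervalIntegral.integral_const_mul, intervalIntegral.integral_const_mul,
    expPrimitive, expPrimitive, expPrimitive, expPrimitive,
    integral_interval_sub_left (hint _ 0 b) (hint _ 0 a),
    integral_interval_sub_left (hint _ 0 b) (hint _ 0 a)]

lemma eigenFun_eq (l : ℂ) (x : ℝ) :
    eigenFun g l x
      = ((exp (I * l * Real.pi / 2) - exp (I * -l * Real.pi / 2))
            * (expVolterra g (-l) x - expVolterra g l x)
          + exp (I * l * Real.pi / 2) * ftilde g l * exp (I * l * x)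
          + exp (I * -l * Real.pi / 2) * ftilde g (-l) * exp (I * -l * x)) / 2 := by
  have h₁ : ∫ t in (0:ℝ)..x, cos (l * ((Real.pi : ℂ) / 2 - x + t)) * g t
      = ∫ t in (0:ℝ)..x, cos (l * (Real.pi / 2 - x) + l * t) * g t :=
    integral_congr fun t _ => by ring_nf
  have h₂ : ∫ t in x..Real.pi, cos (l * ((Real.pi : ℂ) / 2 - t + x)) * g t
      = ∫ t in x..Real.pi, cos (l * (Real.pi / 2 + x) + -l * t) * g t :=
    integral_congr fun t _ => by ring_nf
  have e₁ : exp (l * (Real.pi / 2 - x) * I) = exp (I * l * Real.pi / 2) * exp (I * -l * x) := by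
    rw [← exp_add]; ring_nf
  have e₂ : exp (-(l * (Real.pi / 2 - x)) * I) = exp (I * -l * Real.pi / 2) * exp (I * l * x) := by
    rw [← exp_add]; ring_nf
  have e₃ : exp (l * (Real.pi / 2 + x) * I) = exp (I * l * Real.pi / 2) * exp (I * l * x) := by
    rw [← exp_add]; ring_nf
  have e₄ : exp (-(l * (Real.pi / 2 + x)) * I) = exp (I * -l * Real.pi / 2) * exp (I * -l * x) := by
    rw [← exp_add]; ring_nf
  rw [eigenFun, h₁, h₂, integral_cos_add_mul_mul hg, integral_cos_add_mul_mul hg, neg_neg,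
    e₁, e₂, e₃, e₄, expPrimitive_zero, expPrimitive_zero, expPrimitive_pi, expPrimitive_pi,
    expVolterra, expVolterra]
  ring

end Eigenfunction

lemma exp_half_mul_exp_half_neg (m : ℂ) :
    exp (I * m * Real.pi / 2) * exp (I * -m * Real.pi / 2) = 1 := by
  rw [← exp_add]; ring_nf; exact exp_zero

lemma exp_half_sub_exp_half_neg (m : ℂ) :
    exp (I * m * Real.pi / 2) - exp (I * -m * Real.pi / 2) = 2 * I * sin (m * Real.pi / 2) := by
  rw [show I * m * Real.pi / 2 = m * Real.pi / 2 * I by ring,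
    show I * -m * Real.pi / 2 = -(m * Real.pi / 2) * I by ring, exp_mul_I, exp_mul_I, cos_neg,
    sin_neg]
  ring

lemma exp_pi_eq_sq (m : ℂ) : exp (I * m * Real.pi) = exp (I * m * Real.pi / 2) ^ 2 := by
  rw [sq, ← exp_add]; ring_nf

noncomputable def eigenFunDeriv (g : ℝ → ℂ) (l : ℂ) (x : ℝ) : ℂ :=
  I * l * ((exp (I * -l * Real.pi / 2) - exp (I * l * Real.pi / 2))
        * (expVolterra g (-l) x + expVolterra g l x)
      + exp (I * l * Real.pi / 2) * ftilde g l * exp (I * l * x)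
      - exp (I * -l * Real.pi / 2) * ftilde g (-l) * exp (I * -l * x)) / 2

section Derivatives

variable {g : ℝ → ℂ} (hg : Continuous g)
include hg

lemma hasDerivAt_eigenFun (l : ℂ) (x : ℝ) :
    HasDerivAt (eigenFun g l) (eigenFunDeriv g l x) x := by
  refine (((((hasDerivAt_expVolterra hg (-l) x).sub (hasDerivAt_expVolterra hg l x)).const_mul _).add
      ((hasDerivAt_cexp_mul_ofReal (I * l) x).const_mul _)).add
      ((hasDerivAt_cexp_mul_ofReal (I * -l) x).const_mul _)).div_const 2
    |>.congr_of_eventuallyEq (Filter.Eventually.of_forall (eigenFun_eq hg l)) |>.congr_deriv ?_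
  rw [eigenFunDeriv]; ring

lemma hasDerivAt_eigenFunDeriv (l : ℂ) (x : ℝ) :
    HasDerivAt (eigenFunDeriv g l)
      (-l ^ 2 * eigenFun g l x + 2 * l * sin (l * Real.pi / 2) * g x) x := by
  refine (((((hasDerivAt_expVolterra hg (-l) x).add (hasDerivAt_expVolterra hg l x)).const_mul _).add
      ((hasDerivAt_cexp_mul_ofReal (I * l) x).const_mul _)).sub
      ((hasDerivAt_cexp_mul_ofReal (I * -l) x).const_mul _)).const_mul (I * l) |>.div_const 2
    |>.congr_deriv ?_
  rw [eigenFun_eq hg]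
  linear_combination (norm := ring_nf) (-I * l * g x) * exp_half_sub_exp_half_neg l
  simp only [I_sq]
  ring

end Derivatives

lemma eigenFun_zero_eq_pi (g : ℝ → ℂ) (l : ℂ) : eigenFun g l 0 = eigenFun g l Real.pi := by
  simp only [eigenFun, integral_same, zero_add, add_zero, ofReal_zero]
  refine integral_congr fun t _ => ?_
  rw [← cos_neg]
  ring_nf

lemma eigenFunDeriv_zero_eq_pi (g : ℝ → ℂ) (l : ℂ) :
    eigenFunDeriv g l 0 = eigenFunDeriv g l Real.pi := by
  simp only [eigenFunDeriv, expVolterra, expPrimitive_zero, expPrimitive_pi, ofReal_zero,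
    mul_zero, exp_zero, add_zero, exp_pi_eq_sq]
  linear_combination (I * l / 2 * (ftilde g (-l) * exp (I * -l * Real.pi / 2)
    - ftilde g l * exp (I * l * Real.pi / 2))) * exp_half_mul_exp_half_neg l

section Characteristic

variable {g : ℝ → ℂ} (hg : Continuous g)
include hg

lemma integral_eigenFun_mul_conj (l : ℂ) :
    ∫ x in (0:ℝ)..Real.pi, eigenFun g l x * conj (g x)
      = ((exp (I * l * Real.pi / 2) - exp (I * -l * Real.pi / 2))
            * (expVolterraInner g (-l) - expVolterraInner g l)
          + exp (I * l * Real.pi / 2) * (ftilde g l * conj (ftilde g (conj l)))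
          + exp (I * -l * Real.pi / 2) * (ftilde g (-l) * conj (ftilde g (conj (-l))))) / 2 := by
  set p := exp (I * l * Real.pi / 2)
  set q := exp (I * -l * Real.pi / 2)
  have hV (m : ℂ) : IntervalIntegrable (fun x => expVolterra g m x * conj (g x)) volume 0 Real.pi :=
    (by have := continuous_expVolterra hg m; fun_prop : Continuous _).intervalIntegrable _ _
  have hE (m : ℂ) :
      IntervalIntegrable (fun x : ℝ => exp (I * m * x) * conj (g x)) volume 0 Real.pi :=
    (by fun_prop : Continuous fun x : ℝ => exp (I * m * x) * conj (g x)).intervalIntegrable _ _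
  calc ∫ x in (0:ℝ)..Real.pi, eigenFun g l x * conj (g x)
      = ∫ x in (0:ℝ)..Real.pi,
          ((p - q) * (expVolterra g (-l) x * conj (g x) - expVolterra g l x * conj (g x))
            + p * ftilde g l * (exp (I * l * x) * conj (g x))
            + q * ftilde g (-l) * (exp (I * -l * x) * conj (g x))) / 2 :=
        integral_congr fun x _ => by rw [eigenFun_eq hg]; ring
    _ = _ := by
        rw [intervalIntegral.integral_div,
          integral_add (((hV _).sub (hV _)).const_mul _ |>.add ((hE _).const_mul _))
            ((hE _).const_mul _),
          integral_add ((((hV _).sub (hV _)).const_mul _)) ((hE _).const_mul _),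
          intervalIntegral.integral_const_mul, intervalIntegral.integral_const_mul,
          intervalIntegral.integral_const_mul, integral_sub (hV _) (hV _),
          ← conj_ftilde_conj_s6, ← conj_ftilde_conj_s6, expVolterraInner, expVolterraInner]
        ring

lemma Rfun_sub_Rfun_neg (l : ℂ) :
    Rfun g l - Rfun g (-l)
      = -4 * I * sin (l * Real.pi / 2) * ∫ x in (0:ℝ)..Real.pi, eigenFun g l x * conj (g x) := by
  have hneg (m : ℂ) : exp (-I * m * Real.pi) = exp (I * -m * Real.pi / 2) ^ 2 := by
    rw [← exp_pi_eq_sq]; ring_nf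
  rw [Rfun, Rfun, PhiFun_eq_sub hg, PhiFun_eq_sub hg, integral_eigenFun_mul_conj hg, hneg, hneg,
    exp_pi_eq_sq, exp_pi_eq_sq, neg_neg]
  linear_combination
    ((expVolterraInner g (-l) - expVolterraInner g l)
        * (exp (I * l * Real.pi / 2) * exp (I * -l * Real.pi / 2) - 1)
      + exp (I * l * Real.pi / 2) * exp (I * -l * Real.pi / 2)
        * (ftilde g l * conj (ftilde g (conj l)) - ftilde g (-l) * conj (ftilde g (conj (-l)))))
      * exp_half_mul_exp_half_neg l
    - ((exp (I * l * Real.pi / 2) - exp (I * -l * Real.pi / 2))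
          * (expVolterraInner g (-l) - expVolterraInner g l)
        + exp (I * l * Real.pi / 2) * (ftilde g l * conj (ftilde g (conj l)))
        + exp (I * -l * Real.pi / 2) * (ftilde g (-l) * conj (ftilde g (conj (-l)))))
      * exp_half_sub_exp_half_neg l

lemma mul_integral_eigenFun_mul_conj {α : ℝ} {l : ℂ} (hl : l ≠ 0)
    (hs : sin (l * Real.pi / 2) ≠ 0) (hroot : DeltaA g α l = 0) :
    α * ∫ x in (0:ℝ)..Real.pi, eigenFun g l x * conj (g x) = 2 * l * sin (l * Real.pi / 2) := by
  rw [DeltaA, Delta0, Rfun_sub_Rfun_neg hg, show (Real.pi : ℂ) * l = 2 * (l * Real.pi / 2) by ring,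
    cos_two_mul] at hroot
  field_simp at hroot
  have hfactor : sin (l * Real.pi / 2)
      * (α * (∫ x in (0:ℝ)..Real.pi, eigenFun g l x * conj (g x)) - 2 * l * sin (l * Real.pi / 2))
      = 0 := by
    linear_combination (-1 / 4 : ℂ) * hroot - 2 * l * sin_sq_add_cos_sq (l * Real.pi / 2)
  exact sub_eq_zero.1 ((mul_eq_zero.1 hfactor).resolve_left hs)

end Characteristic

lemma ContinuousOn.exists_continuous_eqOn_Icc {β : Type*} [TopologicalSpace β] {v : ℝ → β}
    {a b : ℝ} (hab : a ≤ b) (hv : ContinuousOn v (Icc a b)) :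
    ∃ g : ℝ → β, Continuous g ∧ EqOn v g (Icc a b) :=
  ⟨IccExtend hab ((Icc a b).domRestrict v), hv.domRestrict.Icc_extend',
    fun _ hx => (IccExtend_of_mem hab ((Icc a b).domRestrict v) hx).symm⟩

section Congr

variable {v g : ℝ → ℂ} (hvg : EqOn v g (Icc 0 Real.pi))
include hvg

lemma ftilde_congr (m : ℂ) : ftilde v m = ftilde g m :=
  integral_congr fun x hx => by rw [uIcc_of_le Real.pi_pos.le] at hx; rw [hvg hx]

lemma PhiFun_congr (m : ℂ) : PhiFun v m = PhiFun g m := by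
  refine integral_congr fun x hx => ?_
  rw [uIcc_of_le Real.pi_pos.le] at hx
  rw [hvg hx, integral_congr fun t ht => ?_]
  rw [uIcc_of_le hx.1] at ht
  rw [hvg ⟨ht.1, ht.2.trans hx.2⟩]

lemma DeltaA_congr (α : ℝ) (l : ℂ) : DeltaA v α l = DeltaA g α l := by
  simp only [DeltaA, Rfun, PhiFun_congr hvg, ftilde_congr hvg]

lemma eigenFun_congr (l : ℂ) {x : ℝ} (hx : x ∈ Icc 0 Real.pi) :
    eigenFun v l x = eigenFun g l x := by
  rw [eigenFun, eigenFun]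
  congr 1 <;> refine integral_congr fun t ht => ?_
  · rw [uIcc_of_le hx.1] at ht
    rw [hvg ⟨ht.1, ht.2.trans hx.2⟩]
  · rw [uIcc_of_le hx.2] at ht
    rw [hvg ⟨hx.1.trans ht.1, ht.2⟩]

end Congr

theorem stmt6 (v : ℝ → ℂ) (hv : ContinuousOn v (Set.Icc 0 Real.pi))
    (α : ℝ) (l : ℂ) (hl : l ≠ 0)
    (hs : Complex.sin (l * Real.pi / 2) ≠ 0)
    (hroot : DeltaA v α l = 0) :
    ∃ u' u'' : ℝ → ℂ,
      (∀ x ∈ Set.Icc (0:ℝ) Real.pi,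
        HasDerivWithinAt (eigenFun v l) (u' x) (Set.Icc 0 Real.pi) x) ∧
      (∀ x ∈ Set.Icc (0:ℝ) Real.pi,
        HasDerivWithinAt u' (u'' x) (Set.Icc 0 Real.pi) x) ∧
      ContinuousOn u'' (Set.Icc 0 Real.pi) ∧
      eigenFun v l 0 = eigenFun v l Real.pi ∧
      u' 0 = u' Real.pi ∧
      ∀ x ∈ Set.Icc (0:ℝ) Real.pi,
        -u'' x + (α : ℂ) * (∫ t in (0:ℝ)..Real.pi, eigenFun v l t * (starRingEnd ℂ) (v t)) * v x
          = l ^ 2 * eigenFun v l x := by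
  obtain ⟨g, hg, hvg⟩ := hv.exists_continuous_eqOn_Icc Real.pi_pos.le
  have hu : EqOn (eigenFun v l) (eigenFun g l) (Icc 0 Real.pi) := fun x hx =>
    eigenFun_congr hvg l hx
  have hJ : ∫ t in (0:ℝ)..Real.pi, eigenFun v l t * conj (v t)
      = ∫ t in (0:ℝ)..Real.pi, eigenFun g l t * conj (g t) :=
    integral_congr fun t ht => by rw [uIcc_of_le Real.pi_pos.le] at ht; rw [hu ht, hvg ht]
  have hαJ := mul_integral_eigenFun_mul_conj hg hl hs (DeltaA_congr hvg α l ▸ hroot)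
  have hu_cont : Continuous (eigenFun g l) :=
    Differentiable.continuous fun x => (hasDerivAt_eigenFun hg l x).differentiableAt
  refine ⟨eigenFunDeriv g l, fun x => -l ^ 2 * eigenFun g l x + 2 * l * sin (l * Real.pi / 2) * g x,
    fun x hx => (hasDerivAt_eigenFun hg l x).hasDerivWithinAt.congr hu (hu hx),
    fun x _ => (hasDerivAt_eigenFunDeriv hg l x).hasDerivWithinAt,
    by fun_prop, eigenFun_zero_eq_pi v l, eigenFunDeriv_zero_eq_pi g l, fun x hx => ?_⟩
  rw [hJ, hu hx, hvg hx]
  linear_combination g x * hαJ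
end

section
/- Let d > 0, let z : ℕ → ℝ satisfy z(k+1) − z(k) ≥ d for all k, let a : ℕ → ℝ be a summable sequence with a(k) ≥ 0 for all k, and let α ∈ ℝ with α ≠ 0. Then the set of indices p ∈ ℕ such that a(p) = 0 and 1 + α·∑_{k ≠ p} a(k)/(z(k) − z(p)) = 0 is finite. -/
set_option maxHeartbeats 1000000

open Filter Topology

theorem stmt10 (d : ℝ) (hd : 0 < d) (z : ℕ → ℝ)
    (hz : ∀ k : ℕ, d ≤ z (k + 1) - z k)
    (a : ℕ → ℝ) (ha : Summable a) (hpos : ∀ k, 0 ≤ a k)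
    (α : ℝ) (hα : α ≠ 0) :
    {p : ℕ | a p = 0 ∧
      1 + α * ∑' k : {k : ℕ // k ≠ p}, a k / (z k - z p) = 0}.Finite := by
  -- gap estimate
  have hgap : ∀ m n : ℕ, m ≤ n → d * ((n : ℝ) - m) ≤ z n - z m := by
    intro m n h
    induction n, h using Nat.le_induction with
    | base => simp
    | succ n hmn ih =>
      have h1 := hz n
      push_cast
      nlinarith
  set S : ℕ → ℝ := fun p => ∑' k : {k : ℕ // k ≠ p}, a k / (z k - z p) with hSdef
  -- summability of the absolute values on the subtype
  have hterm : ∀ p : ℕ, ∀ k : ℕ, k ≠ p → |a k / (z k - z p)| ≤ a k / d := by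
    intro p k hk
    have hda : d ≤ |z k - z p| := by
      rcases lt_or_gt_of_ne hk with h | h
      · have h1 := hgap k p h.le
        have h2 : (1:ℝ) ≤ (p:ℝ) - k := by
          have : (k:ℝ) + 1 ≤ p := by exact_mod_cast h
          linarith
        rw [abs_sub_comm, abs_of_nonneg (by nlinarith)]
        nlinarith
      · have h1 := hgap p k h.le
        have h2 : (1:ℝ) ≤ (k:ℝ) - p := by
          have : (p:ℝ) + 1 ≤ k := by exact_mod_cast h
          linarith
        rw [abs_of_nonneg (by nlinarith)]
        nlinarith
    rw [abs_div, abs_of_nonneg (hpos k)]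
    gcongr
    exact hpos k
  have habs : ∀ p : ℕ, Summable (fun k : {k : ℕ // k ≠ p} => |a k / (z k - z p)|) := by
    intro p
    exact Summable.of_nonneg_of_le (fun k => abs_nonneg _)
      (fun k => hterm p k k.2) ((ha.subtype _).div_const d)
  -- key: S tends to 0
  have hT : Tendsto S atTop (𝓝 0) := by
    rw [Metric.tendsto_atTop]
    intro ε hε
    obtain ⟨N, hN⟩ : ∃ N : ℕ, ∑' k, a (k + N) < d * ε / 2 := by
      have h1 := (tendsto_sum_nat_add a).eventually
        (gt_mem_nhds (show (0:ℝ) < d * ε / 2 by positivity))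
      exact h1.exists
    set A := ∑ k ∈ Finset.range N, a k with hA
    have hA0 : 0 ≤ A := Finset.sum_nonneg fun k _ => hpos k
    obtain ⟨M, hM⟩ := exists_nat_gt (2 * A / (d * ε))
    set P := N + M with hPdef
    refine ⟨P, fun p hp => ?_⟩
    have hpN : N ≤ p := le_trans (Nat.le_add_right N M) hp
    set D : ℝ := d * ((p : ℝ) + 1 - N) with hD
    have hD0 : 0 < D := by
      have : (N:ℝ) ≤ p := Nat.cast_le.mpr hpN
      have : (0:ℝ) < (p:ℝ) + 1 - N := by linarith
      positivity
    -- bounding function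
    set g : ℕ → ℝ := fun k => if k < N then a k / D else a k / d with hg
    have hg0 : ∀ k, 0 ≤ g k := by
      intro k
      simp only [hg]
      split
      · exact div_nonneg (hpos k) hD0.le
      · exact div_nonneg (hpos k) hd.le
    have hgs : Summable g := by
      refine Summable.of_nonneg_of_le hg0 ?_ ((ha.div_const d).add (ha.div_const D))
      intro k
      simp only [hg]
      split
      · have h1 : 0 ≤ a k / d := div_nonneg (hpos k) hd.le
        linarith
      · have h1 : 0 ≤ a k / D := div_nonneg (hpos k) hD0.le
        linarith
    -- termwise bound over the subtype
    have hbound : ∀ k : {k : ℕ // k ≠ p}, |a k / (z k - z p)| ≤ g k := by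
      rintro ⟨k, hk⟩
      simp only [hg]
      by_cases hkN : k < N
      · simp only [hkN, if_true]
        have hkp : k < p := lt_of_lt_of_le hkN hpN
        have h1 := hgap k p hkp.le
        have h2 : ((p:ℝ) + 1 - N) ≤ (p:ℝ) - k := by
          have : (k:ℝ) + 1 ≤ N := by exact_mod_cast hkN
          linarith
        have hzp : D ≤ z p - z k := by
          calc D = d * ((p:ℝ) + 1 - N) := rfl
          _ ≤ d * ((p:ℝ) - k) := by gcongr
          _ ≤ z p - z k := h1
        rw [abs_div, abs_of_nonneg (hpos k), abs_sub_comm,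
          abs_of_nonneg (by linarith)]
        gcongr
        exact hpos k
      · simp only [hkN, if_false]
        exact hterm p k hk
    -- compute/bound the tsum of g
    have hgsum : ∑' k, g k < ε / 2 + ε / 2 := by
      have hsplit := Summable.sum_add_tsum_nat_add N hgs
      have h1 : ∑ k ∈ Finset.range N, g k = A / D := by
        rw [hA, Finset.sum_div]
        apply Finset.sum_congr rfl
        intro k hk
        simp only [hg, if_pos (Finset.mem_range.mp hk)]
      have h2 : ∑' k, g (k + N) = (∑' k, a (k + N)) / d := by
        rw [← tsum_div_const]
        apply tsum_congr
        intro k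
        simp only [hg, if_neg (by omega : ¬ k + N < N)]
      rw [← hsplit, h1, h2]
      have hfirst : A / D < ε / 2 := by
        rw [div_lt_iff₀ hD0, hD]
        have hMp : (M:ℝ) ≤ (p:ℝ) + 1 - N := by
          have h5 : (P:ℝ) ≤ p := Nat.cast_le.mpr hp
          have hcast : (P:ℝ) = N + M := by exact_mod_cast hPdef
          linarith
        have h3 : 2 * A < (M:ℝ) * (d * ε) := (div_lt_iff₀ (by positivity)).mp hM
        nlinarith [mul_nonneg (sub_nonneg.mpr hMp) (mul_pos hd hε).le]
      have hsecond : (∑' k, a (k + N)) / d < ε / 2 := by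
        rw [div_lt_iff₀ hd]
        linarith [hN]
      linarith
    -- put it together
    rw [Real.dist_eq, sub_zero]
    have e1 : |S p| ≤ ∑' k : {k : ℕ // k ≠ p}, |a ↑k / (z ↑k - z p)| := by
      have e0 := norm_tsum_le_tsum_norm
        (f := fun k : {k : ℕ // k ≠ p} => a ↑k / (z ↑k - z p))
        (by simpa only [Real.norm_eq_abs] using habs p)
      simp only [hSdef]
      simpa only [Real.norm_eq_abs] using e0
    have e2 : ∑' k : {k : ℕ // k ≠ p}, |a ↑k / (z ↑k - z p)| ≤ ∑' k, g k :=
      Summable.tsum_le_tsum_of_inj Subtype.val Subtype.val_injective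
        (fun c _ => hg0 c) hbound (habs p) hgs
    linarith
  -- conclude
  have h1 : Tendsto (fun p => 1 + α * S p) atTop (𝓝 1) := by
    have := (tendsto_const_nhds (α := ℕ) (x := (1:ℝ))).add
      ((tendsto_const_nhds (α := ℕ) (x := α)).mul hT)
    simpa using this
  have h2 := h1.eventually_ne one_ne_zero
  rw [eventually_atTop] at h2
  obtain ⟨M, hM⟩ := h2
  apply Set.Finite.subset (Set.finite_Iio M)
  intro p hp
  by_contra hc
  exact hM p (not_lt.mp hc) hp.2
end

section
/- Let α ∈ ℝ with α ≠ 0, let z : ℕ → ℝ be strictly increasing with z(k) → ∞, and let a : ℕ → ℝ be a summable sequence with a(k) > 0 for all k. Then for every k ∈ ℕ there exists exactly one μ in the open interval (z(k), z(k+1)) such that 1 + α·∑_{j} a(j)/(z(j) − μ) = 0. -/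
/-!
On a gap `(l, r)` of the poles, with `l` and `r` themselves poles, the function
`μ ↦ ∑' j, a j / (z j - μ)` is continuous and, since every term increases with `μ`, strictly
increasing. The term with pole at `l` drives it to `-∞` as `μ → l⁺`, while the remaining terms
stay bounded above by `(∑' j, a j) / (r - μ)`; reflecting `μ ↦ -μ` gives `+∞` as `μ → r⁻`. So it
takes every real value, in particular `-α⁻¹`, exactly once on the gap.
-/

open Set Filter Topology

section Gap

variable {ι : Type*} {a z : ι → ℝ} {l r : ℝ}

lemma div_sub_lt_div_sub {c w μ₁ μ₂ : ℝ} (hc : 0 < c) (h : μ₁ < μ₂) (hw : w < μ₁ ∨ μ₂ < w) :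
    c / (w - μ₁) < c / (w - μ₂) := by
  rcases hw with hw | hw
  · rw [← neg_sub μ₁, ← neg_sub μ₂, div_neg, div_neg, neg_lt_neg_iff]
    exact div_lt_div_of_pos_left hc (by linarith) (by linarith)
  · exact div_lt_div_of_pos_left hc (by linarith) (by linarith)

lemma min_le_abs_sub_of_mem_Icc {w c d x : ℝ} (hw : w ≤ l ∨ r ≤ w) (hx : x ∈ Icc c d) :
    min (c - l) (r - d) ≤ |w - x| := by
  rcases hw with hw | hw
  · rw [abs_sub_comm]
    exact (min_le_left _ _).trans <| (sub_le_sub hx.1 hw).trans (le_abs_self _)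
  · exact (min_le_right _ _).trans <| (sub_le_sub hw hx.2).trans (le_abs_self _)

lemma norm_div_sub_le (hgap : ∀ j, z j ≤ l ∨ r ≤ z j) {c d : ℝ} (hc : l < c) (hd : d < r)
    (j : ι) {x : ℝ} (hx : x ∈ Icc c d) :
    ‖a j / (z j - x)‖ ≤ |a j| / min (c - l) (r - d) := by
  rw [Real.norm_eq_abs, abs_div]
  exact div_le_div_of_nonneg_left (abs_nonneg _) (lt_min (by linarith) (by linarith))
    (min_le_abs_sub_of_mem_Icc (hgap j) hx)

lemma summable_div_sub (hgap : ∀ j, z j ≤ l ∨ r ≤ z j) (ha : Summable a) {μ : ℝ}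
    (hμ : μ ∈ Ioo l r) : Summable fun j => a j / (z j - μ) :=
  (ha.abs.div_const _).of_norm_bounded (norm_div_sub_le hgap hμ.1 hμ.2 · ⟨le_rfl, le_rfl⟩)

lemma continuousOn_tsum_div_sub (hgap : ∀ j, z j ≤ l ∨ r ≤ z j) (ha : Summable a) :
    ContinuousOn (fun μ => ∑' j, a j / (z j - μ)) (Ioo l r) := by
  intro x ⟨hlx, hxr⟩
  have hlc : l < (l + x) / 2 := by linarith
  have hdr : (x + r) / 2 < r := by linarith
  have hIcc : ContinuousOn (fun μ => ∑' j, a j / (z j - μ)) (Icc ((l + x) / 2) ((x + r) / 2)) := by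
    refine continuousOn_tsum (fun j => ?_) (ha.abs.div_const _)
      fun j _ => norm_div_sub_le hgap hlc hdr j
    refine continuousOn_const.div (continuousOn_const.sub continuousOn_id) fun μ hμ => ?_
    exact abs_pos.mp <| (lt_min (by linarith) (by linarith)).trans_le
      (min_le_abs_sub_of_mem_Icc (hgap j) hμ)
  exact (hIcc.continuousAt (Icc_mem_nhds (by linarith) (by linarith))).continuousWithinAt

lemma strictMonoOn_tsum_div_sub [Nonempty ι] (hgap : ∀ j, z j ≤ l ∨ r ≤ z j) (ha : Summable a)
    (hpos : ∀ j, 0 < a j) : StrictMonoOn (fun μ => ∑' j, a j / (z j - μ)) (Ioo l r) := by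
  intro μ₁ hμ₁ μ₂ hμ₂ h
  have hterm (j : ι) : a j / (z j - μ₁) < a j / (z j - μ₂) :=
    div_sub_lt_div_sub (hpos j) h <| (hgap j).imp (·.trans_lt hμ₁.1) hμ₂.2.trans_le
  obtain ⟨j⟩ := ‹Nonempty ι›
  exact (summable_div_sub hgap ha hμ₁).tsum_lt_tsum (fun j => (hterm j).le) (hterm j)
    (summable_div_sub hgap ha hμ₂)

/-- The pole at `l` dominates: every other term is at most `a j / (r - μ)`. -/
lemma tsum_div_sub_le {i : ι} (hi : z i = l) (hgap : ∀ j, z j ≤ l ∨ r ≤ z j) (ha : Summable a)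
    (ha0 : ∀ j, 0 ≤ a j) {μ : ℝ} (hμ : μ ∈ Ioo l r) :
    ∑' j, a j / (z j - μ) ≤ (∑' j, a j) / (r - μ) + a i / (l - μ) := by
  classical
  have hsingle := hasSum_ite_eq i (a i / (l - μ))
  have hrμ : 0 < r - μ := sub_pos.mpr hμ.2
  have hterm (j : ι) :
      a j / (z j - μ) ≤ a j / (r - μ) + if j = i then a i / (l - μ) else 0 := by
    have hj0 : 0 ≤ a j / (r - μ) := div_nonneg (ha0 j) hrμ.le
    split_ifs with hji
    · subst hji; rw [hi]; linarith
    · rcases hgap j with hj | hj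
      · linarith [div_nonpos_of_nonneg_of_nonpos (ha0 j) (by linarith [hμ.1] : z j - μ ≤ 0)]
      · linarith [div_le_div_of_nonneg_left (ha0 j) hrμ (by linarith : r - μ ≤ z j - μ)]
  calc ∑' j, a j / (z j - μ)
      ≤ ∑' j, (a j / (r - μ) + if j = i then a i / (l - μ) else 0) :=
        (summable_div_sub hgap ha hμ).tsum_le_tsum hterm ((ha.div_const _).add hsingle.summable)
    _ = (∑' j, a j) / (r - μ) + a i / (l - μ) := by
        rw [(ha.div_const _).tsum_add hsingle.summable, tsum_div_const, hsingle.tsum_eq]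

lemma tendsto_tsum_div_sub_nhdsGT {i : ι} (hi : z i = l) (hlr : l < r)
    (hgap : ∀ j, z j ≤ l ∨ r ≤ z j) (ha : Summable a) (ha0 : ∀ j, 0 ≤ a j) (hai : 0 < a i) :
    Tendsto (fun μ => ∑' j, a j / (z j - μ)) (𝓝[>] l) atBot := by
  have hbounded : Tendsto (fun μ => (∑' j, a j) / (r - μ)) (𝓝[>] l) (𝓝 ((∑' j, a j) / (r - l))) :=
    (continuousAt_const.div (continuousAt_const.sub continuousAt_id)
      (sub_ne_zero.mpr hlr.ne')).tendsto.mono_left nhdsWithin_le_nhds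
  have hpole : Tendsto (fun μ => a i / (l - μ)) (𝓝[>] l) atBot := by
    have hsub : Tendsto (fun μ => l - μ) (𝓝[>] l) (𝓝[<] 0) := by
      refine tendsto_nhdsWithin_iff.mpr ⟨?_, eventually_nhdsWithin_of_forall fun μ hμ => ?_⟩
      · have h : Tendsto (fun μ => l - μ) (𝓝 l) (𝓝 (l - l)) := tendsto_const_nhds.sub tendsto_id
        simpa using h.mono_left nhdsWithin_le_nhds
      · exact sub_neg.mpr (mem_Ioi.mp hμ)
    simpa only [div_eq_mul_inv, Function.comp_def] using
      (tendsto_inv_nhdsLT_zero.comp hsub).const_mul_atBot hai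
  refine tendsto_atBot_mono' _ ?_ (hbounded.add_atBot hpole)
  filter_upwards [Ioo_mem_nhdsGT hlr] with μ hμ using tsum_div_sub_le hi hgap ha ha0 hμ

lemma tendsto_tsum_div_sub_nhdsLT {i : ι} (hi : z i = r) (hlr : l < r)
    (hgap : ∀ j, z j ≤ l ∨ r ≤ z j) (ha : Summable a) (ha0 : ∀ j, 0 ≤ a j) (hai : 0 < a i) :
    Tendsto (fun μ => ∑' j, a j / (z j - μ)) (𝓝[<] r) atTop := by
  have hreflected : Tendsto (fun ν => ∑' j, a j / (-z j - ν)) (𝓝[>] (-r)) atBot :=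
    tendsto_tsum_div_sub_nhdsGT (z := fun j => -z j) (r := -l) (i := i) (by simp [hi])
      (neg_lt_neg hlr) (fun j => (hgap j).symm.imp neg_le_neg neg_le_neg) ha ha0 hai
  have hreflect (μ : ℝ) : ∑' j, a j / (z j - μ) = -∑' j, a j / (-z j - -μ) := by
    rw [← tsum_neg]
    congr with j
    rw [show -z j - -μ = -(z j - μ) by ring, div_neg, neg_neg]
  have hneg : Tendsto Neg.neg (𝓝[<] r) (𝓝[>] (-r)) := by
    simpa using tendsto_neg_nhdsLT_neg (a := -r)
  simpa only [hreflect, Function.comp_def] using tendsto_neg_atBot_atTop.comp (hreflected.comp hneg)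

theorem existsUnique_mem_Ioo_tsum_div_sub_eq {i i' : ι} (hi : z i = l) (hi' : z i' = r)
    (hlr : l < r) (hgap : ∀ j, z j ≤ l ∨ r ≤ z j) (ha : Summable a) (hpos : ∀ j, 0 < a j)
    (t : ℝ) : ∃! μ, μ ∈ Ioo l r ∧ ∑' j, a j / (z j - μ) = t := by
  have : Nonempty ι := ⟨i⟩
  have ha0 (j : ι) : 0 ≤ a j := (hpos j).le
  obtain ⟨μ, hμ, hμt⟩ := (continuousOn_tsum_div_sub hgap ha).surjOn_of_tendsto
    (nonempty_Ioo.2 hlr)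
    ((tendsto_comp_coe_Ioo_atBot hlr).2 (tendsto_tsum_div_sub_nhdsGT hi hlr hgap ha ha0 (hpos i)))
    ((tendsto_comp_coe_Ioo_atTop hlr).2 (tendsto_tsum_div_sub_nhdsLT hi' hlr hgap ha ha0 (hpos i')))
    (mem_univ t)
  exact ⟨μ, ⟨hμ, hμt⟩, fun ν ⟨hν, hνt⟩ =>
    (strictMonoOn_tsum_div_sub hgap ha hpos).injOn hν hμ (hνt.trans hμt.symm)⟩

end Gap

theorem stmt11_general (α : ℝ) (hα : α ≠ 0) (z : ℕ → ℝ) (hz : StrictMono z)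
    (a : ℕ → ℝ) (ha : Summable a) (hpos : ∀ j, 0 < a j) (k : ℕ) :
    ∃! μ : ℝ, μ ∈ Set.Ioo (z k) (z (k + 1)) ∧
      1 + α * ∑' j : ℕ, a j / (z j - μ) = 0 := by
  have hgap (j : ℕ) : z j ≤ z k ∨ z (k + 1) ≤ z j :=
    (le_or_gt j k).imp (hz.monotone ·) (hz.monotone ·)
  have hroot (x : ℝ) : 1 + α * x = 0 ↔ x = -α⁻¹ := by
    rw [eq_neg_iff_add_eq_zero, ← mul_right_inj' hα]
    field_simp
    constructor <;> intro h <;> linarith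
  simpa only [hroot] using
    existsUnique_mem_Ioo_tsum_div_sub_eq rfl rfl (hz k.lt_add_one) hgap ha hpos (-α⁻¹)

theorem stmt11 (α : ℝ) (hα : α ≠ 0) (z : ℕ → ℝ) (hz : StrictMono z)
    (hztop : Filter.Tendsto z Filter.atTop Filter.atTop)
    (a : ℕ → ℝ) (ha : Summable a) (hpos : ∀ j, 0 < a j) (k : ℕ) :
    ∃! μ : ℝ, μ ∈ Set.Ioo (z k) (z (k + 1)) ∧
      1 + α * ∑' j : ℕ, a j / (z j - μ) = 0 :=
  stmt11_general α hα z hz a ha hpos k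
end

section
/- Let v : [0,π] → ℂ be continuous, α ∈ ℝ, and let λ ∈ ℂ with λ ≠ 0 and sin(λπ/2) ≠ 0. Define y(x) = −(1/(2λ sin(πλ/2)))·[ ∫₀^x cos λ(π/2 − x + t) v(t) dt + ∫ₓ^π cos λ(π/2 − t + x) v(t) dt ]. Then (1 + α·∫₀^π y(x) conj(v(x)) dx)·Δ(0,λ) = Δ(α,λ). -/
open MeasureTheory intervalIntegral

/-- The resolvent of `L₀y = −y''` with periodic boundary conditions applied to `v`. -/
noncomputable def resolventFun (v : ℝ → ℂ) (l : ℂ) (x : ℝ) : ℂ :=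
  -(1 / (2 * l * Complex.sin ((Real.pi : ℂ) * l / 2))) *
    ((∫ t in (0:ℝ)..x, Complex.cos (l * ((Real.pi : ℂ) / 2 - x + t)) * v t)
      + ∫ t in x..Real.pi, Complex.cos (l * ((Real.pi : ℂ) / 2 - t + x)) * v t)

/-!
Every quantity in the identity is an integral over the triangle `0 ≤ t ≤ x ≤ π` of an exponential
kernel against `conj v(t) v(x)` or `v(t) conj v(x)`: `Φ` by definition, `ṽ(λ) ṽ*(λ)` as the
integral over the whole square (its upper half flipped by Fubini), and `∫ y conj v` after flipping
the `∫ₓ^π` half of `y`. On the triangle the exponential identity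
`(1 - e^{iλπ}) e^{-iλs} - (1 - e^{-iλπ}) e^{iλs} = -4i sin(λπ/2) cos λ(π/2 - s)`
turns `R(λ) - R(-λ)` into `-4i sin(λπ/2)` times the triangle integral of the resolvent kernel,
that is into `8iλ sin²(λπ/2) ∫ y conj v`, while `Δ(0,λ) = 4 sin²(λπ/2)`.
-/

open Set Complex ComplexConjugate
open scoped Real

theorem intervalIntegral_triangle_swap {E : Type*} [NormedAddCommGroup E] [NormedSpace ℝ E]
    [CompleteSpace E] {F : ℝ → ℝ → E} (hF : Continuous F.uncurry) {a b : ℝ} (hab : a ≤ b) :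
    ∫ x in a..b, ∫ t in x..b, F x t = ∫ t in a..b, ∫ x in a..t, F x t := by
  set H : ℝ → ℝ → E := fun x => {t | x ≤ t}.indicator (F x)
  have hH : IntegrableOn H.uncurry (uIoc a b ×ˢ uIoc a b) :=
    ((hF.continuousOn.integrableOn_compact (isCompact_uIcc.prod isCompact_uIcc)).mono_set
      (prod_mono uIoc_subset_uIcc uIoc_subset_uIcc)).indicator
      (measurableSet_le measurable_fst measurable_snd)
  have inner_t : ∀ x ∈ Icc a b, ∫ t in a..b, H x t = ∫ t in x..b, F x t := by
    intro x hx
    have hHx : ∀ c d, IntervalIntegrable (H x) volume c d := fun c d =>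
      intervalIntegrable_iff.2 ((intervalIntegrable_iff.1
        ((hF.comp (Continuous.prodMk_right x)).intervalIntegrable c d)).indicator
        measurableSet_Ici)
    have below : ∫ t in a..x, H x t = 0 := by
      rw [intervalIntegral.integral_congr_ae (g := fun _ => 0), intervalIntegral.integral_zero]
      filter_upwards [Measure.ae_ne volume x] with t hne ht
      exact indicator_of_notMem (not_le.2 (lt_of_le_of_ne (uIoc_of_le hx.1 ▸ ht).2 hne)) _
    have above : ∫ t in x..b, H x t = ∫ t in x..b, F x t :=
      integral_congr fun t ht => indicator_of_mem (uIcc_of_le hx.2 ▸ ht).1 _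
    rw [← integral_add_adjacent_intervals (hHx a x) (hHx x b), below, above, zero_add]
  have inner_x : ∀ t ∈ Icc a b, ∫ x in a..b, H x t = ∫ x in a..t, F x t :=
    fun t ht => intervalIntegral.integral_indicator ht
  calc ∫ x in a..b, ∫ t in x..b, F x t = ∫ x in a..b, ∫ t in a..b, H x t :=
        integral_congr fun x hx => (inner_t x (uIcc_of_le hab ▸ hx)).symm
    _ = ∫ t in a..b, ∫ x in a..b, H x t := intervalIntegral_intervalIntegral_swap hH
    _ = ∫ t in a..b, ∫ x in a..t, F x t :=
        integral_congr fun t ht => inner_x t (uIcc_of_le hab ▸ ht)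

noncomputable def triangleIntegral (a b : ℝ) (K : ℝ → ℝ → ℂ) : ℂ :=
  ∫ x in a..b, ∫ t in a..x, K x t

section Triangle

variable {a b : ℝ} {K K₁ K₂ : ℝ → ℝ → ℂ}

lemma continuous_integral_to_self (hK : Continuous K.uncurry) :
    Continuous fun x => ∫ t in a..x, K x t :=
  continuous_parametric_intervalIntegral_of_continuous hK continuous_id

lemma continuous_uncurry_swap (hK : Continuous K.uncurry) :
    Continuous (fun x t => K t x).uncurry :=
  hK.comp continuous_swap

lemma continuous_integral_from_self (hK : Continuous K.uncurry) :
    Continuous fun x => ∫ t in x..b, K x t :=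
  (continuous_parametric_intervalIntegral_of_continuous hK continuous_id).neg.congr
    fun x => (integral_symm b x).symm

lemma triangleIntegral_add (hK₁ : Continuous K₁.uncurry) (hK₂ : Continuous K₂.uncurry) :
    triangleIntegral a b (fun x t => K₁ x t + K₂ x t)
      = triangleIntegral a b K₁ + triangleIntegral a b K₂ := by
  rw [triangleIntegral, triangleIntegral, triangleIntegral, ← integral_add
    ((continuous_integral_to_self hK₁).intervalIntegrable a b)
    ((continuous_integral_to_self hK₂).intervalIntegrable a b)]
  refine integral_congr fun x _ => integral_add ?_ ?_
  · exact (hK₁.comp (Continuous.prodMk_right x)).intervalIntegrable a x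
  · exact (hK₂.comp (Continuous.prodMk_right x)).intervalIntegrable a x

lemma triangleIntegral_sub (hK₁ : Continuous K₁.uncurry) (hK₂ : Continuous K₂.uncurry) :
    triangleIntegral a b (fun x t => K₁ x t - K₂ x t)
      = triangleIntegral a b K₁ - triangleIntegral a b K₂ := by
  rw [triangleIntegral, triangleIntegral, triangleIntegral, ← integral_sub
    ((continuous_integral_to_self hK₁).intervalIntegrable a b)
    ((continuous_integral_to_self hK₂).intervalIntegrable a b)]
  refine integral_congr fun x _ => integral_sub ?_ ?_
  · exact (hK₁.comp (Continuous.prodMk_right x)).intervalIntegrable a x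
  · exact (hK₂.comp (Continuous.prodMk_right x)).intervalIntegrable a x

lemma triangleIntegral_const_mul (c : ℂ) (K : ℝ → ℝ → ℂ) :
    triangleIntegral a b (fun x t => c * K x t) = c * triangleIntegral a b K := by
  simp only [triangleIntegral, intervalIntegral.integral_const_mul]

lemma triangleIntegral_swap (hK : Continuous K.uncurry) (hab : a ≤ b) :
    triangleIntegral a b (fun x t => K t x) = ∫ x in a..b, ∫ t in x..b, K x t :=
  (intervalIntegral_triangle_swap hK hab).symm

lemma integral_square_eq_triangleIntegral_add (hK : Continuous K.uncurry) (hab : a ≤ b) :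
    ∫ x in a..b, ∫ t in a..b, K x t
      = triangleIntegral a b K + triangleIntegral a b (fun x t => K t x) := by
  have hKx : ∀ x c d, IntervalIntegrable (K x) volume c d := fun x =>
    (hK.comp (Continuous.prodMk_right x)).intervalIntegrable
  rw [triangleIntegral_swap hK hab, triangleIntegral, ← sub_eq_iff_eq_add', ← integral_sub
    ((continuous_parametric_intervalIntegral_of_continuous' hK a b).intervalIntegrable a b)
    ((continuous_integral_to_self hK).intervalIntegrable a b)]
  exact integral_congr fun x _ => integral_interval_sub_left (hKx x a b) (hKx x a x)

end Triangle

lemma one_sub_exp_mul_exp_sub_eq_sin_mul_cos (l s : ℂ) :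
    (1 - cexp (I * l * π)) * cexp (-(I * l * s)) - (1 - cexp (-(I * l * π))) * cexp (I * l * s)
      = -4 * I * sin (l * π / 2) * cos (l * (π / 2 - s)) := by
  rw [sin, cos]
  set u := cexp (l * π / 2 * I)
  set v := cexp (-(l * π / 2) * I)
  have huv : u * v = 1 := by rw [← Complex.exp_add]; ring_nf; exact Complex.exp_zero
  have hu : cexp (I * l * π) = u ^ 2 := by rw [← Complex.exp_nat_mul]; ring_nf
  have hv : cexp (-(I * l * π)) = v ^ 2 := by rw [← Complex.exp_nat_mul]; ring_nf
  have hp : cexp (l * (π / 2 - s) * I) = u * cexp (-(I * l * s)) := by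
    rw [← Complex.exp_add]; ring_nf
  have hm : cexp (-(l * (π / 2 - s)) * I) = v * cexp (I * l * s) := by
    rw [← Complex.exp_add]; ring_nf
  rw [hu, hv, hp, hm]
  linear_combination (cexp (I * l * s) - cexp (-(I * l * s))) * huv
    + (v - u) * (u * cexp (-(I * l * s)) + v * cexp (I * l * s)) * I_sq

lemma Delta0_eq_four_mul_sin_sq (l : ℂ) : Delta0 l = 4 * sin (l * π / 2) ^ 2 := by
  rw [Delta0, show (π : ℂ) * l = 2 * (l * π / 2) by ring, cos_two_mul]
  linear_combination (-4 : ℂ) * sin_sq_add_cos_sq (l * π / 2)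

noncomputable def phiKernel (w : ℝ → ℂ) (μ : ℂ) (x t : ℝ) : ℂ :=
  cexp (-I * μ * (x - t)) * conj (w t) * w x

noncomputable def cosKernel (w : ℝ → ℂ) (l : ℂ) (x t : ℝ) : ℂ :=
  cos (l * (π / 2 - x + t)) * (w t * conj (w x) + conj (w t) * w x)

section Kernels

variable {w : ℝ → ℂ}

lemma continuous_phiKernel (hw : Continuous w) (μ : ℂ) : Continuous (phiKernel w μ).uncurry := by
  unfold phiKernel Function.uncurry; fun_prop

lemma PhiFun_eq_triangleIntegral (w : ℝ → ℂ) (μ : ℂ) :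
    PhiFun w μ = triangleIntegral 0 π (phiKernel w μ) :=
  integral_congr fun _ _ => (intervalIntegral.integral_mul_const _ _).symm

lemma ftilde_mul_conj_ftilde_conj (w : ℝ → ℂ) (μ : ℂ) :
    ftilde w μ * conj (ftilde w (conj μ)) = ∫ x in 0..π, ∫ t in 0..π, phiKernel w μ x t := by
  rw [ftilde, ftilde, ← intervalIntegral_conj, ← intervalIntegral.integral_mul_const]
  refine integral_congr fun x _ => ?_
  rw [← intervalIntegral.integral_const_mul]
  refine integral_congr fun t _ => ?_
  simp only [phiKernel, map_mul, ← Complex.exp_conj, map_neg, conj_I, conj_conj, conj_ofReal]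
  rw [mul_mul_mul_comm, ← Complex.exp_add]
  ring_nf

lemma Rfun_eq_triangleIntegral (hw : Continuous w) (μ : ℂ) :
    Rfun w μ = triangleIntegral 0 π (fun x t => (1 - cexp (I * μ * π)) * phiKernel w μ x t
      - (1 - cexp (-(I * μ * π))) * phiKernel w μ t x) := by
  have hK := continuous_phiKernel hw μ
  have hK₁ : Continuous (fun x t => (1 - cexp (I * μ * π)) * phiKernel w μ x t).uncurry :=
    continuous_const.fun_mul hK
  have hK₂ : Continuous (fun x t => (1 - cexp (-(I * μ * π))) * phiKernel w μ t x).uncurry :=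
    continuous_const.fun_mul (continuous_uncurry_swap hK)
  have hE : cexp (-(I * μ * π)) * cexp (I * μ * π) = 1 := by
    rw [← Complex.exp_add]; ring_nf; exact Complex.exp_zero
  rw [triangleIntegral_sub hK₁ hK₂,
    triangleIntegral_const_mul, triangleIntegral_const_mul, Rfun, ftilde_mul_conj_ftilde_conj,
    integral_square_eq_triangleIntegral_add hK Real.pi_pos.le, ← PhiFun_eq_triangleIntegral,
    neg_mul, neg_mul]
  linear_combination PhiFun w μ * hE

lemma Rfun_sub_Rfun_neg_s14 (hw : Continuous w) (l : ℂ) :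
    Rfun w l - Rfun w (-l) = -4 * I * sin (l * π / 2) * triangleIntegral 0 π (cosKernel w l) := by
  have hK : ∀ μ : ℂ, Continuous (fun x t => (1 - cexp (I * μ * π)) * phiKernel w μ x t
      - (1 - cexp (-(I * μ * π))) * phiKernel w μ t x).uncurry :=
    fun μ => by unfold phiKernel Function.uncurry; fun_prop
  rw [Rfun_eq_triangleIntegral hw, Rfun_eq_triangleIntegral hw,
    ← triangleIntegral_sub (hK l) (hK (-l)), ← triangleIntegral_const_mul]
  congr 1; ext x t
  have key := one_sub_exp_mul_exp_sub_eq_sin_mul_cos l (x - t)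
  simp only [phiKernel, cosKernel]
  rw [show (t : ℂ) - x = -(x - t) by ring, show l * (π / 2 - x + t) = l * (π / 2 - (x - t)) by ring]
  simp only [neg_mul, mul_neg, neg_neg] at key ⊢
  linear_combination (conj (w t) * w x + conj (w x) * w t) * key

lemma integral_resolventFun_mul_conj (hw : Continuous w) (l : ℂ) :
    ∫ x in 0..π, resolventFun w l x * conj (w x)
      = -(1 / (2 * l * sin (π * l / 2))) * triangleIntegral 0 π (cosKernel w l) := by
  set A : ℝ → ℝ → ℂ := fun x t => cos (l * (π / 2 - x + t)) * w t
  set B : ℝ → ℝ → ℂ := fun x t => cos (l * (π / 2 - t + x)) * w t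
  have hA : Continuous A.uncurry := by simp only [A]; fun_prop
  have hB : Continuous B.uncurry := by simp only [B]; fun_prop
  have hcw : Continuous fun x => conj (w x) := continuous_conj.comp hw
  have hAcw : Continuous (fun x t => A x t * conj (w x)).uncurry :=
    hA.fun_mul (hcw.comp continuous_fst)
  have hBcw : Continuous (fun x t => B x t * conj (w x)).uncurry :=
    hB.fun_mul (hcw.comp continuous_fst)
  have hBcw' : Continuous (fun x t => B t x * conj (w t)).uncurry := continuous_uncurry_swap hBcw
  have lower : ∫ x in 0..π, (∫ t in 0..x, A x t) * conj (w x)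
      = triangleIntegral 0 π (fun x t => A x t * conj (w x)) :=
    integral_congr fun _ _ => (intervalIntegral.integral_mul_const _ _).symm
  have upper : ∫ x in 0..π, (∫ t in x..π, B x t) * conj (w x)
      = triangleIntegral 0 π (fun x t => B t x * conj (w t)) := by
    rw [triangleIntegral_swap hBcw Real.pi_pos.le]
    exact integral_congr fun _ _ => (intervalIntegral.integral_mul_const _ _).symm
  have split : ∀ x, resolventFun w l x * conj (w x) = -(1 / (2 * l * sin (π * l / 2))) *
      ((∫ t in 0..x, A x t) * conj (w x) + (∫ t in x..π, B x t) * conj (w x)) := fun x => by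
    rw [resolventFun]; ring
  rw [integral_congr fun x _ => split x, intervalIntegral.integral_const_mul,
    integral_add (((continuous_integral_to_self hA).fun_mul hcw).intervalIntegrable 0 π)
      (((continuous_integral_from_self hB).fun_mul hcw).intervalIntegrable 0 π),
    lower, upper, ← triangleIntegral_add hAcw hBcw']
  congr 2; ext x t
  simp only [cosKernel, A, B]; ring

lemma mul_Delta0_eq_DeltaA_of_continuous (hw : Continuous w) (α : ℝ) {l : ℂ} (hl : l ≠ 0)
    (hs : sin (l * π / 2) ≠ 0) :
    (1 + (α : ℂ) * ∫ x in 0..π, resolventFun w l x * conj (w x)) * Delta0 l = DeltaA w α l := by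
  rw [DeltaA, Rfun_sub_Rfun_neg_s14 hw, integral_resolventFun_mul_conj hw, Delta0_eq_four_mul_sin_sq,
    show (π : ℂ) * l / 2 = l * π / 2 by ring]
  field_simp

end Kernels

section Congr

variable {v w : ℝ → ℂ}

lemma ftilde_congr_s14 (h : EqOn v w (uIcc 0 π)) (μ : ℂ) : ftilde v μ = ftilde w μ :=
  integral_congr fun x hx => by rw [h hx]

lemma PhiFun_congr_s14 (h : EqOn v w (uIcc 0 π)) (μ : ℂ) : PhiFun v μ = PhiFun w μ :=
  integral_congr fun x hx => by
    rw [h hx, integral_congr fun t ht => by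
      rw [h (uIcc_subset_uIcc left_mem_uIcc hx ht)]]

lemma DeltaA_congr_s14 (h : EqOn v w (uIcc 0 π)) (α : ℝ) (l : ℂ) : DeltaA v α l = DeltaA w α l := by
  simp only [DeltaA, Rfun, ftilde_congr_s14 h, PhiFun_congr_s14 h]

lemma integral_resolventFun_mul_conj_congr (h : EqOn v w (uIcc 0 π)) (l : ℂ) :
    ∫ x in 0..π, resolventFun v l x * conj (v x) = ∫ x in 0..π, resolventFun w l x * conj (w x) :=
  integral_congr fun x hx => by
    rw [resolventFun, resolventFun, h hx,
      integral_congr fun t ht => by rw [h (uIcc_subset_uIcc left_mem_uIcc hx ht)],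
      integral_congr (a := x) (b := π) fun t ht => by
        rw [h (uIcc_subset_uIcc hx right_mem_uIcc ht)]]

end Congr

theorem stmt14 (v : ℝ → ℂ) (hv : ContinuousOn v (Set.Icc 0 Real.pi))
    (α : ℝ) (l : ℂ) (hl : l ≠ 0) (hs : Complex.sin (l * Real.pi / 2) ≠ 0) :
    (1 + (α : ℂ) * ∫ x in (0:ℝ)..Real.pi, resolventFun v l x * (starRingEnd ℂ) (v x))
        * Delta0 l
      = DeltaA v α l := by
  set w : ℝ → ℂ := fun x => v (projIcc 0 π Real.pi_pos.le x)
  have hw : Continuous w :=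
    hv.comp_continuous (continuous_subtype_val.comp continuous_projIcc) fun x => (projIcc _ _ _ x).2
  have hvw : EqOn v w (uIcc 0 π) := fun x hx => by
    rw [uIcc_of_le Real.pi_pos.le] at hx
    simp only [w, projIcc_of_mem _ hx]
  rw [integral_resolventFun_mul_conj_congr hvw, DeltaA_congr_s14 hvw]
  exact mul_Delta0_eq_DeltaA_of_continuous hw α hl hs
end

section
/- Let v ∈ L²((0,π), ℂ) and α ∈ ℝ. Then the function λ ↦ Δ(α,λ) = 2(1 − cos(πλ)) + (α/(2iλ))(R(λ) − R(−λ)), defined for λ ≠ 0, tends to the limit −α·π·|ṽ(0)|² as λ → 0 (where ṽ(0) = ∫₀^π v(x) dx); equivalently, the entire extension of Δ(α,·) satisfies Δ(α,0) = −α·π·|∫₀^π v(x) dx|². -/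
open MeasureTheory intervalIntegral

/-!
Since `Δ(0,λ) = (1 - e^{-iλπ})(1 - e^{iλπ})`, the difference `R(λ) - R(-λ)` splits as
`Δ(0,λ)(Φ(λ) - Φ(-λ)) - (1 - e^{-iλπ}) ṽ(λ)ṽ*(λ) + (1 - e^{iλπ}) ṽ(-λ)ṽ*(-λ)`.
After division by `2iλ`, the first term tends to `0` because `Δ(0,λ) = O(λ²)` and `Φ` is
locally bounded (`|Φ(λ)| ≤ e^{π|λ|} ‖v‖₁²`), while `(1 - e^{∓iλπ})/(2iλ) → ±π/2`
and `ṽ(±λ)ṽ*(±λ) → |ṽ(0)|²` by continuity of `ṽ`. Hence the limit is `-π |ṽ(0)|²`,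
times `α`.
-/

open Filter Topology Complex Real ComplexConjugate

theorem MeasureTheory.MemLp.intervalIntegrable_of_Ioo {E : Type*} [NormedAddCommGroup E]
    {f : ℝ → E} {a b : ℝ} {p : ENNReal}
    (hab : a ≤ b) (hp : 1 ≤ p) (hf : MemLp f p (volume.restrict (Set.Ioo a b))) :
    IntervalIntegrable f volume a b :=
  (intervalIntegrable_iff_integrableOn_Ioo_of_le hab).2 (hf.integrable hp)

theorem norm_cexp_neg_I_mul_le (l : ℂ) {s : ℝ} (hs : |s| ≤ π) :
    ‖cexp (-I * l * s)‖ ≤ Real.exp (π * ‖l‖) := by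
  refine (norm_exp_le_exp_norm _).trans (Real.exp_le_exp.2 ?_)
  simp only [norm_mul, norm_neg, norm_I, one_mul, norm_real, Real.norm_eq_abs]
  nlinarith [norm_nonneg l]

theorem norm_PhiFun_le {v : ℝ → ℂ} (hv : IntervalIntegrable v volume 0 π) (l : ℂ) :
    ‖PhiFun v l‖ ≤ Real.exp (π * ‖l‖) * (∫ t in (0:ℝ)..π, ‖v t‖) ^ 2 := by
  set C := ∫ t in (0:ℝ)..π, ‖v t‖
  have hbound : IntervalIntegrable (fun t => Real.exp (π * ‖l‖) * ‖v t‖) volume 0 π :=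
    hv.norm.const_mul _
  have hinner : ∀ x ∈ Set.Ioc 0 π,
      ‖∫ t in (0:ℝ)..x, cexp (-I * l * (x - t)) * conj (v t)‖ ≤
        Real.exp (π * ‖l‖) * C := by
    rintro x ⟨hx0, hxπ⟩
    calc _ ≤ ∫ t in (0:ℝ)..x, Real.exp (π * ‖l‖) * ‖v t‖ := by
          refine norm_integral_le_of_norm_le hx0.le (ae_of_all _ fun t ht => ?_)
            (hbound.mono_set ?_)
          · rw [norm_mul, RCLike.norm_conj,
              show (x:ℂ) - t = ((x - t : ℝ) : ℂ) by push_cast; rfl]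
            gcongr
            exact norm_cexp_neg_I_mul_le l (abs_le.2 ⟨by linarith [ht.2], by linarith [ht.1]⟩)
          · exact Set.uIcc_subset_uIcc Set.left_mem_uIcc
              (by rw [Set.uIcc_of_le pi_pos.le]; exact ⟨hx0.le, hxπ⟩)
      _ ≤ ∫ t in (0:ℝ)..π, Real.exp (π * ‖l‖) * ‖v t‖ :=
          intervalIntegral.integral_mono_interval le_rfl hx0.le hxπ
            (ae_of_all _ fun t => by positivity) hbound
      _ = Real.exp (π * ‖l‖) * C := intervalIntegral.integral_const_mul _ _
  calc ‖PhiFun v l‖ ≤ ∫ x in (0:ℝ)..π, Real.exp (π * ‖l‖) * C * ‖v x‖ :=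
        norm_integral_le_of_norm_le pi_pos.le (ae_of_all _ fun x hx => by
          rw [norm_mul]; gcongr; exact hinner x hx) (hv.norm.const_mul _)
    _ = Real.exp (π * ‖l‖) * C ^ 2 := by rw [intervalIntegral.integral_const_mul]; ring

theorem continuous_ftilde {v : ℝ → ℂ} (hv : IntervalIntegrable v volume 0 π) :
    Continuous (ftilde v) := by
  refine continuous_iff_continuousAt.2 fun l₀ =>
    intervalIntegral.continuousAt_of_dominated_interval
    (bound := fun x => Real.exp (π * (‖l₀‖ + 1)) * ‖v x‖) ?_ ?_ (hv.norm.const_mul _) ?_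
  · exact Eventually.of_forall fun l =>
      (by fun_prop : Continuous fun x : ℝ => cexp (-I * l * x)).aestronglyMeasurable.mul
        hv.def'.aestronglyMeasurable
  · filter_upwards [Metric.ball_mem_nhds l₀ one_pos] with l hl
    refine ae_of_all _ fun x hx => ?_
    rw [Set.uIoc_of_le pi_pos.le] at hx
    have hl' : ‖l‖ ≤ ‖l₀‖ + 1 := by
      have := norm_le_norm_add_norm_sub' l l₀
      rw [mem_ball_iff_norm] at hl
      linarith
    rw [norm_mul]
    gcongr
    exact (norm_cexp_neg_I_mul_le l (abs_le.2 ⟨by linarith [hx.1, pi_pos], hx.2⟩)).trans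
      (Real.exp_le_exp.2 (by gcongr))
  · exact ae_of_all _ fun x _ => by fun_prop

theorem Delta0_eq_mul (l : ℂ) :
    Delta0 l = (1 - cexp (-I * l * π)) * (1 - cexp (I * l * π)) := by
  have h : cexp (-I * l * π) * cexp (I * l * π) = 1 := by
    rw [← Complex.exp_add]; ring_nf; exact Complex.exp_zero
  rw [Delta0, Complex.cos]
  ring_nf at h ⊢
  linear_combination -h

theorem Rfun_sub_Rfun_neg_div (v : ℝ → ℂ) (l : ℂ) :
    (Rfun v l - Rfun v (-l)) / (2 * I * l) =
      Delta0 l / (2 * I * l) * (PhiFun v l - PhiFun v (-l))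
        - (1 - cexp (-I * l * π)) / (2 * I * l) * (ftilde v l * conj (ftilde v (conj l)))
        + (1 - cexp (I * l * π)) / (2 * I * l) *
            (ftilde v (-l) * conj (ftilde v (conj (-l)))) := by
  simp only [Rfun, Delta0_eq_mul, neg_mul, mul_neg, neg_neg]
  ring

theorem tendsto_one_sub_cexp_mul_div (c d : ℂ) :
    Tendsto (fun l => (1 - cexp (c * l)) / (d * l)) (𝓝[≠] 0) (𝓝 (-c / d)) := by
  have h : HasDerivAt (fun l => 1 - cexp (c * l)) (-c) 0 := by
    simpa using (((hasDerivAt_id (0:ℂ)).const_mul c).cexp).const_sub 1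
  refine ((hasDerivAt_iff_tendsto_slope.mp h).div_const d).congr fun l => ?_
  simp [slope_def_field, div_div, mul_comm]

theorem tendsto_one_sub_cexp_neg_div :
    Tendsto (fun l => (1 - cexp (-I * l * π)) / (2 * I * l)) (𝓝[≠] 0) (𝓝 (π / 2)) := by
  have h := tendsto_one_sub_cexp_mul_div (-I * π) (2 * I)
  rw [show -(-I * π) / (2 * I) = (π / 2 : ℂ) by field_simp] at h
  exact h.congr fun l => by rw [mul_right_comm]

theorem tendsto_one_sub_cexp_div :
    Tendsto (fun l => (1 - cexp (I * l * π)) / (2 * I * l)) (𝓝[≠] 0) (𝓝 (-(π / 2))) := by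
  have h := tendsto_one_sub_cexp_mul_div (I * π) (2 * I)
  rw [show -(I * π) / (2 * I) = -(π / 2 : ℂ) by field_simp] at h
  exact h.congr fun l => by rw [mul_right_comm]

theorem tendsto_Delta0_div : Tendsto (fun l => Delta0 l / (2 * I * l)) (𝓝[≠] 0) (𝓝 0) := by
  have hexp : Tendsto (fun l : ℂ => 1 - cexp (I * l * π)) (𝓝[≠] 0) (𝓝 0) :=
    (Continuous.tendsto' (by fun_prop) 0 0 (by simp)).mono_left nhdsWithin_le_nhds
  simpa [Delta0_eq_mul, div_mul_eq_mul_div] using tendsto_one_sub_cexp_neg_div.mul hexp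

theorem tendsto_ftilde_mul_conj {v : ℝ → ℂ} (hv : IntervalIntegrable v volume 0 π) :
    Tendsto (fun l => ftilde v l * conj (ftilde v (conj l))) (𝓝 0)
      (𝓝 ((‖∫ x in (0:ℝ)..π, v x‖ : ℂ) ^ 2)) := by
  have hc := continuous_ftilde hv
  refine Continuous.tendsto' (by fun_prop) 0 _ ?_
  simp [ftilde, mul_conj, normSq_eq_norm_sq]

theorem tendsto_Delta0_div_mul_PhiFun_sub {v : ℝ → ℂ} (hv : IntervalIntegrable v volume 0 π) :
    Tendsto (fun l => Delta0 l / (2 * I * l) * (PhiFun v l - PhiFun v (-l))) (𝓝[≠] 0)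
      (𝓝 0) := by
  set C := ∫ t in (0:ℝ)..π, ‖v t‖
  have hbound (l : ℂ) : ‖PhiFun v l - PhiFun v (-l)‖ ≤ 2 * (Real.exp (π * ‖l‖) * C ^ 2) := by
    have := norm_PhiFun_le hv (-l)
    rw [norm_neg] at this
    linarith [norm_sub_le (PhiFun v l) (PhiFun v (-l)), norm_PhiFun_le hv l]
  refine squeeze_zero_norm (fun l => (norm_mul _ _).trans_le
    (mul_le_mul_of_nonneg_left (hbound l) (norm_nonneg _))) ?_
  have hcont : Tendsto (fun l : ℂ => 2 * (Real.exp (π * ‖l‖) * C ^ 2)) (𝓝[≠] 0)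
      (𝓝 (2 * (Real.exp (π * ‖(0:ℂ)‖) * C ^ 2))) :=
    (Continuous.tendsto (by fun_prop) 0).mono_left nhdsWithin_le_nhds
  simpa using tendsto_Delta0_div.norm.mul hcont

theorem tendsto_Rfun_sub_Rfun_neg_div {v : ℝ → ℂ} (hv : IntervalIntegrable v volume 0 π) :
    Tendsto (fun l => (Rfun v l - Rfun v (-l)) / (2 * I * l)) (𝓝[≠] 0)
      (𝓝 (-π * (‖∫ x in (0:ℝ)..π, v x‖ : ℂ) ^ 2)) := by
  have hneg : Tendsto (fun l : ℂ => -l) (𝓝 0) (𝓝 0) := by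
    simpa using (continuous_neg.tendsto (0:ℂ))
  have hP := (tendsto_ftilde_mul_conj hv).mono_left (nhdsWithin_le_nhds (s := {0}ᶜ))
  have hPneg := ((tendsto_ftilde_mul_conj hv).comp hneg).mono_left
    (nhdsWithin_le_nhds (s := {0}ᶜ))
  convert ((tendsto_Delta0_div_mul_PhiFun_sub hv).sub (tendsto_one_sub_cexp_neg_div.mul hP)).add
    (tendsto_one_sub_cexp_div.mul hPneg) using 1
  · exact funext (Rfun_sub_Rfun_neg_div v)
  · congr 1; ring

theorem stmt15 (v : ℝ → ℂ)
    (hv : MemLp v 2 (volume.restrict (Set.Ioo (0:ℝ) Real.pi))) (α : ℝ) :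
    Filter.Tendsto (fun l : ℂ => DeltaA v α l) (nhdsWithin 0 {(0:ℂ)}ᶜ)
      (nhds (-(α : ℂ) * (Real.pi : ℂ) *
        ((‖∫ x in (0:ℝ)..Real.pi, v x‖ : ℝ) : ℂ) ^ 2)) := by
  have hvi : IntervalIntegrable v volume 0 π := hv.intervalIntegrable_of_Ioo pi_pos.le one_le_two
  have hDelta0 : Tendsto Delta0 (𝓝[≠] 0) (𝓝 0) :=
    (Continuous.tendsto' (by unfold Delta0; fun_prop) 0 0 (by simp [Delta0])).mono_left
      nhdsWithin_le_nhds
  convert hDelta0.add ((tendsto_Rfun_sub_Rfun_neg_div hvi).const_mul (α : ℂ)) using 1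
  · funext l
    rw [DeltaA, div_mul_eq_mul_div, mul_div_assoc]
  · congr 1; ring
end
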